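/- arXiv:1602.07137 — 4 statements merged into one kernel-verified Lean document; each statement's English description precedes it below -/
import Mathlib

section
/- For real numbers γ, δ > 0 and λ > 5: the expression λ²(γ-δ) + λ(δ-γ) + λγδ(γ-δ) + (γ+δ)(γ-δ) + γδ(δ-γ) + 2(δ-γ) + (γ-δ) factors as (γ-δ)(λ(λ-2) + γδ(λ-1) + (λ-1) + γ + δ), where the second factor is strictly positive; hence the expression is positive iff γ > δ, zero iff γ = δ, negative iff γ < δ. -/
theorem lemma3f_expr_eq_mul {R : Type*} [CommRing R] (γ δ lam : R) :
    lam ^ 2 * (γ - δ) + lam * (δ - γ) + lam * γ * δ * (γ - δ) + (γ + δ) * (γ - δ) +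
        γ * δ * (δ - γ) + 2 * (δ - γ) + (γ - δ) =
      (γ - δ) * (lam * (lam - 2) + γ * δ * (lam - 1) + (lam - 1) + γ + δ) := by
  ring

theorem lemma3f_factor_pos {γ δ lam : ℝ} (hγ : 0 < γ) (hδ : 0 < δ) (hlam : 2 ≤ lam) :
    0 < lam * (lam - 2) + γ * δ * (lam - 1) + (lam - 1) + γ + δ := by
  have hquad : 0 ≤ lam * (lam - 2) := mul_nonneg (by linarith) (by linarith)
  have hmixed : 0 < γ * δ * (lam - 1) := mul_pos (mul_pos hγ hδ) (by linarith)
  linarith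

theorem stmt14 (γ δ lam : ℝ) (hγ : γ > 0) (hδ : δ > 0) (hlam : lam > 5) :
    lam ^ 2 * (γ - δ) + lam * (δ - γ) + lam * γ * δ * (γ - δ) + (γ + δ) * (γ - δ) +
        γ * δ * (δ - γ) + 2 * (δ - γ) + (γ - δ) =
      (γ - δ) * (lam * (lam - 2) + γ * δ * (lam - 1) + (lam - 1) + γ + δ) ∧
    lam * (lam - 2) + γ * δ * (lam - 1) + (lam - 1) + γ + δ > 0 ∧
    (lam ^ 2 * (γ - δ) + lam * (δ - γ) + lam * γ * δ * (γ - δ) + (γ + δ) * (γ - δ) +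
        γ * δ * (δ - γ) + 2 * (δ - γ) + (γ - δ) > 0 ↔ γ > δ) ∧
    (lam ^ 2 * (γ - δ) + lam * (δ - γ) + lam * γ * δ * (γ - δ) + (γ + δ) * (γ - δ) +
        γ * δ * (δ - γ) + 2 * (δ - γ) + (γ - δ) = 0 ↔ γ = δ) ∧
    (lam ^ 2 * (γ - δ) + lam * (δ - γ) + lam * γ * δ * (γ - δ) + (γ + δ) * (γ - δ) +
        γ * δ * (δ - γ) + 2 * (δ - γ) + (γ - δ) < 0 ↔ γ < δ) := by
  have hpos := lemma3f_factor_pos hγ hδ (by linarith : (2 : ℝ) ≤ lam)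
  rw [lemma3f_expr_eq_mul]
  refine ⟨rfl, hpos, ?_, ?_, ?_⟩
  · simpa only [gt_iff_lt, zero_mul, sub_pos] using mul_lt_mul_iff_left₀ (b := 0) (c := γ - δ) hpos
  · rw [mul_eq_zero, or_iff_left hpos.ne', sub_eq_zero]
  · simpa only [zero_mul, sub_neg] using mul_lt_mul_iff_left₀ (b := γ - δ) (c := 0) hpos
end

section
/- For real numbers γ, δ > 0 and λ > 5: λ²δ²γ - λ²δ + λγ²δ - λγδ² + λδ - λγ + γ²δ² - γδ² - δγ² + δ + γ - 1 = (δγ-1)(λδ(λ-2) + γ(λ-1) + δ(λ-1) + δγ + 1), where the second factor is strictly positive; hence the expression has the same sign as δγ - 1. -/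
theorem factorization_case2B (γ δ lam : ℝ) :
    lam ^ 2 * δ ^ 2 * γ - lam ^ 2 * δ + lam * γ ^ 2 * δ - lam * γ * δ ^ 2 + lam * δ -
        lam * γ + γ ^ 2 * δ ^ 2 - γ * δ ^ 2 - δ * γ ^ 2 + δ + γ - 1 =
      (δ * γ - 1) * (lam * δ * (lam - 2) + γ * (lam - 1) + δ * (lam - 1) + δ * γ + 1) := by
  ring

theorem cofactor_case2B_pos {γ δ lam : ℝ} (hγ : 0 ≤ γ) (hδ : 0 ≤ δ) (hlam : 2 ≤ lam) :
    0 < lam * δ * (lam - 2) + γ * (lam - 1) + δ * (lam - 1) + δ * γ + 1 := by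
  have h₁ : 0 ≤ lam * δ * (lam - 2) := by
    have : 0 ≤ lam - 2 := by linarith
    positivity
  have h₂ : 0 ≤ γ * (lam - 1) := mul_nonneg hγ (by linarith)
  have h₃ : 0 ≤ δ * (lam - 1) := mul_nonneg hδ (by linarith)
  have h₄ : 0 ≤ δ * γ := mul_nonneg hδ hγ
  linarith

theorem stmt15 (γ δ lam : ℝ) (hγ : γ > 0) (hδ : δ > 0) (hlam : lam > 5) :
    lam ^ 2 * δ ^ 2 * γ - lam ^ 2 * δ + lam * γ ^ 2 * δ - lam * γ * δ ^ 2 + lam * δ -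
        lam * γ + γ ^ 2 * δ ^ 2 - γ * δ ^ 2 - δ * γ ^ 2 + δ + γ - 1 =
      (δ * γ - 1) * (lam * δ * (lam - 2) + γ * (lam - 1) + δ * (lam - 1) + δ * γ + 1) ∧
    lam * δ * (lam - 2) + γ * (lam - 1) + δ * (lam - 1) + δ * γ + 1 > 0 ∧
    (lam ^ 2 * δ ^ 2 * γ - lam ^ 2 * δ + lam * γ ^ 2 * δ - lam * γ * δ ^ 2 + lam * δ -
        lam * γ + γ ^ 2 * δ ^ 2 - γ * δ ^ 2 - δ * γ ^ 2 + δ + γ - 1 > 0 ↔ δ * γ > 1) ∧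
    (lam ^ 2 * δ ^ 2 * γ - lam ^ 2 * δ + lam * γ ^ 2 * δ - lam * γ * δ ^ 2 + lam * δ -
        lam * γ + γ ^ 2 * δ ^ 2 - γ * δ ^ 2 - δ * γ ^ 2 + δ + γ - 1 < 0 ↔ δ * γ < 1) := by
  have hpos := cofactor_case2B_pos hγ.le hδ.le (by linarith)
  rw [factorization_case2B]
  have mul_neg_iff_of_pos_right {a b : ℝ} (hb : 0 < b) : a * b < 0 ↔ a < 0 := by
    simpa only [zero_mul] using mul_lt_mul_iff_left₀ (b := a) (c := 0) hb
  exact ⟨rfl, hpos, (mul_pos_iff_of_pos_right hpos).trans sub_pos,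
    (mul_neg_iff_of_pos_right hpos).trans sub_neg⟩
end

section
/- Let n ≥ 4 and let Q be the 4×4 matrix with rows (1, δx₁, x₂, x₃), (1/(δx₁), 1, x₂/x₁, x₃/x₁), (1/x₂, x₁/x₂, 1, γx₃/x₂), (1/x₃, x₁/x₃, x₂/(γx₃), 1), where x₁, x₂, x₃ > 0 and γ, δ > 0. Then the characteristic polynomial of Q is λ⁴ - 4λ³ - 2(γ + δ + 1/γ + 1/δ - 4)λ - (γ-1)²(δ-1)²/(γδ). -/
/-!
With `w = (1, x₁⁻¹, x₂⁻¹, x₃⁻¹)` one has `Q i j = w i / w j * P i j`, where `P` is the all-ones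
(consistent) matrix with its `(1,2)` entry multiplied by `δ` and its `(3,4)` entry by `γ`. Such a
diagonal rescaling fixes the identity and multiplies the determinant by `∏ w i * ∏ (w j)⁻¹ = 1`,
so `Q` and `P` have the same characteristic polynomial, and that of `P` only involves `γ` and `δ`.
-/

open Matrix

theorem Matrix.det_of_div_mul {n K : Type*} [Fintype n] [DecidableEq n] [Field K]
    (w : n → K) (hw : ∀ i, w i ≠ 0) (A : Matrix n n K) :
    det (of fun i j => w i / w j * A i j) = det A := by
  calc det (of fun i j => w i / w j * A i j)
      = det (of fun i j => (w j)⁻¹ * (of fun i j => w i * A i j) i j) := by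
        congr 1; ext i j; simp only [of_apply]; ring
    _ = det A := by
        rw [det_mul_row, det_mul_column, ← mul_assoc, ← Finset.prod_mul_distrib]
        simp [hw]

def doublePerturbedOnes {K : Type*} [Field K] (γ δ : K) : Matrix (Fin 4) (Fin 4) K :=
  !![1, δ, 1, 1;
     δ⁻¹, 1, 1, 1;
     1, 1, 1, γ;
     1, 1, γ⁻¹, 1]

theorem det_doublePerturbedOnes_sub_smul {K : Type*} [Field K] {γ δ : K} (hγ : γ ≠ 0)
    (hδ : δ ≠ 0) (lam : K) :
    (doublePerturbedOnes γ δ - lam • 1).det =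
      lam ^ 4 - 4 * lam ^ 3 - 2 * (γ + δ + 1 / γ + 1 / δ - 4) * lam -
        (γ - 1) ^ 2 * (δ - 1) ^ 2 / (γ * δ) := by
  rw [det_succ_row_zero]
  simp only [doublePerturbedOnes, Matrix.sub_apply, Matrix.smul_apply, of_apply, one_apply,
    smul_eq_mul, cons_val', cons_val, cons_val_zero, cons_val_one, cons_val_fin_one, cons_val_succ,
    Fin.sum_univ_succ, Finset.univ_unique, Finset.sum_singleton, det_fin_three, submatrix_apply,
    Fin.succAbove, Fin.succ_zero_eq_one, Fin.succ_one_eq_two, Fin.castSucc_zero, Fin.castSucc_one,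
    Fin.reduceSucc, Fin.reduceCastSucc, Fin.reduceLT, Fin.reduceEq, Fin.val_succ, Fin.val_zero,
    Fin.default_eq_zero, Fin.isValue, ↓reduceIte, pow_zero, pow_one, mul_one, mul_zero, sub_zero,
    zero_add, neg_mul, one_mul]
  field_simp
  ring

theorem stmt18 (x₁ x₂ x₃ γ δ : ℝ) (hx₁ : 0 < x₁) (hx₂ : 0 < x₂) (hx₃ : 0 < x₃)
    (hγ : 0 < γ) (hδ : 0 < δ) :
    ∀ lam : ℝ,
      (!![1, δ * x₁, x₂, x₃;
          1 / (δ * x₁), 1, x₂ / x₁, x₃ / x₁;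
          1 / x₂, x₁ / x₂, 1, γ * x₃ / x₂;
          1 / x₃, x₁ / x₃, x₂ / (γ * x₃), 1] - lam • (1 : Matrix (Fin 4) (Fin 4) ℝ)).det =
        lam ^ 4 - 4 * lam ^ 3 - 2 * (γ + δ + 1 / γ + 1 / δ - 4) * lam -
          (γ - 1) ^ 2 * (δ - 1) ^ 2 / (γ * δ) := by
  intro lam
  set w : Fin 4 → ℝ := ![1, x₁⁻¹, x₂⁻¹, x₃⁻¹]
  have hw : ∀ i, w i ≠ 0 := by
    intro i; fin_cases i <;> simp [w, hx₁.ne', hx₂.ne', hx₃.ne']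
  have hQ : (!![1, δ * x₁, x₂, x₃;
          1 / (δ * x₁), 1, x₂ / x₁, x₃ / x₁;
          1 / x₂, x₁ / x₂, 1, γ * x₃ / x₂;
          1 / x₃, x₁ / x₃, x₂ / (γ * x₃), 1] - lam • (1 : Matrix (Fin 4) (Fin 4) ℝ)) =
      of fun i j => w i / w j * (doublePerturbedOnes γ δ - lam • 1) i j := by
    ext i j
    fin_cases i <;> fin_cases j <;>
      simp [w, doublePerturbedOnes, one_apply, hx₁.ne', hx₂.ne', hx₃.ne', div_eq_mul_inv,
        mul_comm, mul_left_comm, mul_assoc]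
  rw [hQ, det_of_div_mul w hw, det_doublePerturbedOnes_sub_smul hγ.ne' hδ.ne']
end

section
/- Let n ≥ 4, x₁,…,x_{n-1} > 0, and γ, δ > 0. Let P be the n×n pairwise comparison matrix obtained from the consistent matrix A with A₁ⱼ = x_{j-1} (and Aᵢⱼ = x_{j-1}/x_{i-1}, x₀ := 1) by multiplying the (1,2) entry by δ and the (1,3) entry by γ, and their reciprocal entries by 1/δ and 1/γ. Then the characteristic polynomial of P is (-1)ⁿ λ^{n-3}(λ³ - nλ² - (γ/δ + δ/γ) - (n-3)(γ + δ + 1/γ + 1/δ) + 4n - 10). -/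
/-!
Dividing row `i` by `x i` and multiplying column `j` by `x j` is a similarity that turns `P` into
the all-ones matrix perturbed in the entries `(1,2), (1,3)` and their reciprocals, i.e.
`J + e₁ aᵀ + b e₁ᵀ` with `a, b` supported on the indices `2, 3`. This matrix is `U V` with
`U : n × 3`, `V : 3 × n`, so its characteristic polynomial is `X ^ (n - 3)` times that of the
`3 × 3` matrix `V U`, whose entries are `n`, `∑ a`, `∑ b`, `a ⬝ᵥ b` and constants. The linear
coefficient `∑ a + ∑ b + a ⬝ᵥ b` vanishes because `(δ - 1) + (δ⁻¹ - 1) + (δ - 1)(δ⁻¹ - 1) = 0`.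
-/

open Polynomial

namespace Matrix

variable {R : Type*} [CommRing R] {n : Type*} [Fintype n] [DecidableEq n]

theorem det_sub_smul_one_eq_eval_charpoly (M : Matrix n n R) (t : R) :
    (M - t • 1).det = (-1) ^ Fintype.card n * M.charpoly.eval t := by
  rw [eval_charpoly, ← neg_sub, det_neg, smul_one_eq_diagonal, scalar_apply]

theorem charpoly_mul_mul_of_mul_eq_one {A B : Matrix n n R} (hBA : B * A = 1)
    (M : Matrix n n R) : (A * M * B).charpoly = M.charpoly := by
  rw [charpoly_mul_comm, ← Matrix.mul_assoc, hBA, Matrix.one_mul]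

theorem charpoly_one_add_row_add_col (p : n) (a b : n → R) (ha : a p = 0) (hb : b p = 0)
    (hcard : 3 ≤ Fintype.card n) :
    (of fun i j => 1 + (if i = p then a j else 0) + (if j = p then b i else 0)).charpoly =
      X ^ (Fintype.card n - 3) * (X ^ 3 - C (Fintype.card n : R) * X ^ 2
        - C (∑ i, a i + ∑ i, b i + a ⬝ᵥ b) * X
        + C ((Fintype.card n - 1) * (a ⬝ᵥ b) - (∑ i, a i) * ∑ i, b i)) := by
  let U : Matrix n (Fin 3) R := of fun i => ![1, if i = p then 1 else 0, b i]
  let V : Matrix (Fin 3) n R := of ![fun _ => 1, a, fun j => if j = p then 1 else 0]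
  have hUV : (of fun i j => 1 + (if i = p then a j else 0) + (if j = p then b i else 0)) =
      U * V := by
    ext i j
    simp [U, V, mul_apply, Fin.sum_univ_three]
  have hVU : V * U = !![(Fintype.card n : R), 1, ∑ i, b i; ∑ i, a i, 0, a ⬝ᵥ b; 1, 1, 0] := by
    ext k l
    fin_cases k <;> fin_cases l <;> simp [U, V, mul_apply, ha, hb, dotProduct]
  rw [hUV, charpoly_mul_comm_of_le _ _ (by simpa using hcard), hVU, Fintype.card_fin]
  congr 1
  rw [charpoly, det_fin_three]
  simp only [charmatrix_apply_eq, charmatrix_apply_ne, ne_eq, Fin.reduceEq, not_false_eq_true,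
    of_apply, cons_val', cons_val_zero, cons_val_one, cons_val, cons_val_fin_one, map_natCast,
    map_zero, map_one, map_sum, map_add, map_sub, map_mul]
  ring

end Matrix

open Matrix

section DoublyPerturbed

variable {K : Type*} [Field K] {n : Type*} [DecidableEq n]

def doublyPerturbedOnes (p q r : n) (δ γ : K) : Matrix n n K :=
  of fun i j =>
    if i = p ∧ j = q then δ
    else if i = p ∧ j = r then γ
    else if i = q ∧ j = p then δ⁻¹
    else if i = r ∧ j = p then γ⁻¹
    else 1

variable {p q r : n}

theorem doublyPerturbedOnes_eq (hpq : p ≠ q) (hpr : p ≠ r) (δ γ : K) :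
    doublyPerturbedOnes p q r δ γ = of fun i j =>
      1 + (if i = p then (if j = q then δ - 1 else if j = r then γ - 1 else 0) else 0)
        + (if j = p then (if i = q then δ⁻¹ - 1 else if i = r then γ⁻¹ - 1 else 0) else 0) := by
  ext i j
  simp only [doublyPerturbedOnes, of_apply]
  split_ifs <;> simp_all

theorem charpoly_doublyPerturbedOnes [Fintype n] (hpq : p ≠ q) (hpr : p ≠ r) (hqr : q ≠ r)
    {δ γ : K} (hδ : δ ≠ 0) (hγ : γ ≠ 0) :
    (doublyPerturbedOnes p q r δ γ).charpoly =
      X ^ (Fintype.card n - 3) * (X ^ 3 - C (Fintype.card n : K) * X ^ 2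
        + C (-(γ / δ + δ / γ) - (Fintype.card n - 3) * (γ + δ + γ⁻¹ + δ⁻¹)
          + (4 * Fintype.card n - 10))) := by
  let a : n → K := fun j => if j = q then δ - 1 else if j = r then γ - 1 else 0
  let b : n → K := fun i => if i = q then δ⁻¹ - 1 else if i = r then γ⁻¹ - 1 else 0
  have hcard : 3 ≤ Fintype.card n := by
    simpa [hpq, hpr, hqr] using Finset.card_le_univ {p, q, r}
  have sum_eq_add {f : n → K} (hf : ∀ i, i ≠ q ∧ i ≠ r → f i = 0) : ∑ i, f i = f q + f r :=
    Fintype.sum_eq_add q r hqr hf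
  have hsum_a : ∑ i, a i = δ + γ - 2 := by
    rw [sum_eq_add (fun i hi => by simp [a, hi])]
    simp only [a, if_neg hqr.symm, ↓reduceIte]
    ring
  have hsum_b : ∑ i, b i = δ⁻¹ + γ⁻¹ - 2 := by
    rw [sum_eq_add (fun i hi => by simp [b, hi])]
    simp only [b, if_neg hqr.symm, ↓reduceIte]
    ring
  have hab : a ⬝ᵥ b = (δ - 1) * (δ⁻¹ - 1) + (γ - 1) * (γ⁻¹ - 1) := by
    rw [dotProduct, sum_eq_add (fun i hi => by simp [a, hi])]
    simp [a, b, hqr.symm]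
  have hlinear_coeff :
      δ + γ - 2 + (δ⁻¹ + γ⁻¹ - 2) + ((δ - 1) * (δ⁻¹ - 1) + (γ - 1) * (γ⁻¹ - 1)) = 0 := by
    field_simp
    ring
  rw [doublyPerturbedOnes_eq hpq hpr, charpoly_one_add_row_add_col p a b (by simp [a, hpq, hpr])
    (by simp [b, hpq, hpr]) hcard, hsum_a, hsum_b, hab, hlinear_coeff, C_0, zero_mul, sub_zero]
  congr 3
  field_simp
  ring

end DoublyPerturbed

theorem stmt19 (n : ℕ) (hn : 4 ≤ n) (x : Fin n → ℝ) (hx : ∀ i, 0 < x i)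
    (hx0 : x ⟨0, by omega⟩ = 1) (γ δ : ℝ) (hγ : 0 < γ) (hδ : 0 < δ)
    (P : Matrix (Fin n) (Fin n) ℝ)
    (hP : ∀ i j : Fin n,
      P i j =
        if i = (⟨0, by omega⟩ : Fin n) ∧ j = (⟨1, by omega⟩ : Fin n) then
          δ * x j
        else if i = (⟨0, by omega⟩ : Fin n) ∧ j = (⟨2, by omega⟩ : Fin n) then
          γ * x j
        else if i = (⟨1, by omega⟩ : Fin n) ∧ j = (⟨0, by omega⟩ : Fin n) then
          1 / (δ * x (⟨1, by omega⟩ : Fin n))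
        else if i = (⟨2, by omega⟩ : Fin n) ∧ j = (⟨0, by omega⟩ : Fin n) then
          1 / (γ * x (⟨2, by omega⟩ : Fin n))
        else x j / x i) :
    ∀ lam : ℝ,
      (P - lam • (1 : Matrix (Fin n) (Fin n) ℝ)).det =
        (-1 : ℝ) ^ n * lam ^ (n - 3) *
          (lam ^ 3 - n * lam ^ 2 - (γ / δ + δ / γ) -
            ((n : ℝ) - 3) * (γ + δ + 1 / γ + 1 / δ) + (4 * n - 10)) := by
  intro lam
  set i₀ : Fin n := ⟨0, by omega⟩
  set i₁ : Fin n := ⟨1, by omega⟩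
  set i₂ : Fin n := ⟨2, by omega⟩
  have hx_ne (i : Fin n) : x i ≠ 0 := (hx i).ne'
  have hP' : P = diagonal x⁻¹ * doublyPerturbedOnes i₀ i₁ i₂ δ γ * diagonal x := by
    ext i j
    rw [hP, mul_diagonal, diagonal_mul, doublyPerturbedOnes, of_apply]
    split_ifs <;> simp_all [div_eq_inv_mul]
  have hdiag : diagonal x * diagonal x⁻¹ = 1 := by
    rw [diagonal_mul_diagonal, ← diagonal_one]
    congr with i
    exact mul_inv_cancel₀ (hx_ne i)
  rw [det_sub_smul_one_eq_eval_charpoly, hP', charpoly_mul_mul_of_mul_eq_one hdiag,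
    charpoly_doublyPerturbedOnes (by simp [i₀, i₁, Fin.ext_iff]) (by simp [i₀, i₂, Fin.ext_iff])
      (by simp [i₁, i₂, Fin.ext_iff]) hδ.ne' hγ.ne']
  simp only [Fintype.card_fin, eval_mul, eval_pow, eval_X, eval_add, eval_sub, eval_C]
  ring
end
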